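/- For all natural numbers r ≤ n and reals x, 0 < q < 1, the identity Σ_{j=0}^{n} C(n, j) · B_{r,j}(x, q) · B_{n-j}([x]_{q^{-1}}) = C(n, r) · ([x]_q)^r · B_{n-r}(1) holds, where B_k denotes the k-th Bernoulli polynomial (with B_{r,j}(x,q) = 0 for j < r). -/

import Mathlib

/-! With `z = [x]_{q⁻¹}` one has `[1-x]_q = 1 - z`. The identity `C(n,j) C(j,r) = C(n,r) C(n-r,j-r)`
turns the left side into `C(n,r) [x]_q^r Σ_k C(n-r,k) (1-z)^k B_{n-r-k}(z)`, and this sum is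
`B_{n-r}(z + (1 - z))` by the addition formula, which follows from the generating function because
`e^{zv} e^{tv} = e^{(z+t)v}`. -/

open PowerSeries

/-- The `q`-analog `[t]_q = (q^t - 1)/(q - 1)`, where `q ^ t` is the real power. -/
noncomputable def qnum (q t : ℝ) : ℝ := (q ^ t - 1) / (q - 1)

/-- The `q`-Bernstein polynomial `B_{r,n}(x,q) = C(n,r) ([x]_q)^r ([1-x]_q)^{n-r}`;
note that it vanishes for `n < r` since then `C(n,r) = 0`. -/
noncomputable def qBernstein (r n : ℕ) (x q : ℝ) : ℝ :=
  (n.choose r : ℝ) * (qnum q x) ^ r * (qnum q (1 - x)) ^ (n - r)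

theorem exp_sub_one_ne_zero (A : Type*) [CommRing A] [Algebra ℚ A] [Nontrivial A] :
    exp A - 1 ≠ 0 := by
  intro h
  simpa [coeff_exp] using congrArg (coeff 1) h

theorem bernoulli_add_of_egf {K : Type*} [Field K] [Algebra ℚ K] (B : ℕ → K → K)
    (hB : ∀ y : K, (exp K - 1) * mk (fun k => B k y / (k.factorial : K)) = X * rescale y (exp K))
    (z t : K) (m : ℕ) :
    B m (z + t) = ∑ k ∈ Finset.range (m + 1), (m.choose k : K) * t ^ k * B (m - k) z := by
  have := algebraRat.charZero K
  have hegf : rescale t (exp K) * mk (fun k => B k z / (k.factorial : K)) =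
      mk (fun k => B k (z + t) / (k.factorial : K)) := by
    apply mul_left_cancel₀ (exp_sub_one_ne_zero K)
    rw [mul_left_comm, hB, hB, mul_left_comm, exp_mul_exp_eq_exp_add, add_comm]
  have hm := congrArg (coeff m) hegf
  rw [coeff_mul, Finset.Nat.sum_antidiagonal_eq_sum_range_succ_mk] at hm
  simp only [coeff_mk, coeff_rescale, coeff_exp, map_div₀, map_one, map_natCast] at hm
  rw [← mul_div_cancel_left₀ (B m (z + t)) (Nat.cast_ne_zero.2 m.factorial_ne_zero),
    mul_div_assoc, ← hm, Finset.mul_sum]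
  refine Finset.sum_congr rfl fun k hk => ?_
  rw [Nat.cast_choose K (Finset.mem_range_succ_iff.1 hk)]
  field_simp

theorem qnum_one_sub {q : ℝ} (hq0 : 0 < q) (hq1 : q ≠ 1) (x : ℝ) :
    qnum q (1 - x) = 1 - qnum q⁻¹ x := by
  have hq : q - 1 ≠ 0 := sub_ne_zero.2 hq1
  have hqx : q ^ x ≠ 0 := (Real.rpow_pos_of_pos hq0 x).ne'
  have hq_inv : q⁻¹ - 1 ≠ 0 := sub_ne_zero.2 (inv_ne_one.2 hq1)
  rw [qnum, qnum, Real.rpow_sub hq0, Real.rpow_one, Real.inv_rpow hq0.le]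
  field_simp
  ring

theorem sum_choose_mul_choose_mul {R : Type*} [CommSemiring R] {r n : ℕ} (hrn : r ≤ n)
    (f : ℕ → R) :
    ∑ j ∈ Finset.range (n + 1), (n.choose j : R) * j.choose r * f j =
      n.choose r * ∑ k ∈ Finset.range (n - r + 1), ((n - r).choose k : R) * f (r + k) := by
  rw [show n + 1 = r + (n - r + 1) by omega, Finset.sum_range_add, Finset.mul_sum,
    Finset.sum_eq_zero fun j hj => by simp [Nat.choose_eq_zero_of_lt (Finset.mem_range.1 hj)],
    zero_add]
  refine Finset.sum_congr rfl fun k _ => ?_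
  have h := Nat.choose_mul (n := n) (Nat.le_add_right r k)
  rw [Nat.add_sub_cancel_left] at h
  rw [← mul_assoc, ← Nat.cast_mul, ← Nat.cast_mul, h]

/-- Theorem 2.5 (case `Y = 1`): identity relating `q`-Bernstein polynomials and the
Bernoulli polynomials `B k y`, defined by the egf `v e^{yv}/(e^v-1) = Σ B_k(y) v^k/k!`. -/
theorem stmt_10 (q x : ℝ) (hq0 : 0 < q) (hq1 : q < 1) (r n : ℕ) (hrn : r ≤ n)
    (B : ℕ → ℝ → ℝ)
    (hB : ∀ y : ℝ,
      (PowerSeries.exp ℝ - 1) * PowerSeries.mk (fun k => B k y / (k.factorial : ℝ)) =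
        PowerSeries.X * PowerSeries.rescale y (PowerSeries.exp ℝ)) :
    ∑ j ∈ Finset.range (n + 1),
        (n.choose j : ℝ) * qBernstein r j x q * B (n - j) (qnum q⁻¹ x) =
      (n.choose r : ℝ) * (qnum q x) ^ r * B (n - r) 1 := by
  set z := qnum q⁻¹ x
  have hw : qnum q (1 - x) = 1 - z := qnum_one_sub hq0 hq1.ne x
  calc ∑ j ∈ Finset.range (n + 1), (n.choose j : ℝ) * qBernstein r j x q * B (n - j) z
      = ∑ j ∈ Finset.range (n + 1), (n.choose j : ℝ) * j.choose r *
          (qnum q x ^ r * (1 - z) ^ (j - r) * B (n - j) z) := by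
        simp only [qBernstein, hw, mul_assoc]
    _ = n.choose r * ∑ k ∈ Finset.range (n - r + 1), ((n - r).choose k : ℝ) *
          (qnum q x ^ r * (1 - z) ^ (r + k - r) * B (n - (r + k)) z) :=
        sum_choose_mul_choose_mul hrn _
    _ = n.choose r * qnum q x ^ r * B (n - r) (z + (1 - z)) := by
        simp only [bernoulli_add_of_egf B hB, Nat.add_sub_cancel_left, Nat.sub_sub, mul_assoc,
          Finset.mul_sum]
        refine Finset.sum_congr rfl fun k _ => by ring
    _ = n.choose r * qnum q x ^ r * B (n - r) 1 := by rw [add_sub_cancel]
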